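/- Let c3, c6, c7 be the dehomogenizations at z = 1 of C3, C6, C7. Then the lowest-degree homogeneous part of (x+3y)·c3(x,y)·c6(x,y)·c7(x,y) equals a nonzero rational multiple of y(x+3y)(x + 240/17·y)(x^2 + 82080/289·y^2)(x^2 + 40585383/1587545·y^2), which is a product of seven pairwise non-proportional linear forms over ℂ. -/

import Mathlib

open MvPolynomial

/-- Dehomogenization at z = 1 of the cubic C3, as a polynomial in ℚ[x,y]. -/
noncomputable def c3 : MvPolynomial (Fin 2) ℚ :=
  17 * X 0 ^ 3 - 924 * X 0 ^ 2 * X 1 - 153 * X 0 * X 1 ^ 2 - 996 * X 1 ^ 3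
    + 1164 * X 0 ^ 2 + 544 * X 0 * X 1 + 6516 * X 1 ^ 2 - 544 * X 0 - 7680 * X 1

/-- Dehomogenization at z = 1 of the sextic C6. -/
noncomputable def c6 : MvPolynomial (Fin 2) ℚ :=
  289 * X 0 ^ 6 + 754326 * X 0 ^ 4 * X 1 ^ 2 + 2610657 * X 0 ^ 2 * X 1 ^ 4
    + 1906344 * X 1 ^ 6 - 2013848 * X 0 ^ 4 * X 1 - 17946576 * X 0 ^ 2 * X 1 ^ 3
    - 22212504 * X 1 ^ 5 + 1336400 * X 0 ^ 4 + 35856160 * X 0 ^ 2 * X 1 ^ 2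
    + 89326224 * X 1 ^ 4 - 22270208 * X 0 ^ 2 * X 1 - 146421504 * X 1 ^ 3
    + 295936 * X 0 ^ 2 + 84049920 * X 1 ^ 2

/-- Dehomogenization at z = 1 of the septic C7. -/
noncomputable def c7 : MvPolynomial (Fin 2) ℚ :=
  8683464 * X 0 ^ 6 * X 1 - 494984955 * X 0 ^ 4 * X 1 ^ 3
    - 1064093674 * X 0 ^ 2 * X 1 ^ 5 - 558251235 * X 1 ^ 7
    - 11358312 * X 0 ^ 6 + 1253331746 * X 0 ^ 4 * X 1 ^ 2
    + 8340957732 * X 0 ^ 2 * X 1 ^ 4 + 7286240034 * X 1 ^ 6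
    - 920312219 * X 0 ^ 4 * X 1 - 17394911410 * X 0 ^ 2 * X 1 ^ 3
    - 32292289971 * X 1 ^ 5 + 179839940 * X 0 ^ 4
    + 11716330200 * X 0 ^ 2 * X 1 ^ 2 + 55580514660 * X 1 ^ 4
    - 1270036000 * X 0 ^ 2 * X 1 - 32468306400 * X 1 ^ 3

/-- The product T4·c3·c6·c7 (T4 the line x + 3y = 0). -/
noncomputable def prodPoly : MvPolynomial (Fin 2) ℚ := (X 0 + 3 * X 1) * c3 * c6 * c7

/-- The expected lowest-degree (degree 7) homogeneous part, up to a constant. -/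
noncomputable def target7 : MvPolynomial (Fin 2) ℚ :=
  X 1 * (X 0 + 3 * X 1) * (X 0 + C (240 / 17) * X 1)
    * (X 0 ^ 2 + C (82080 / 289) * X 1 ^ 2)
    * (X 0 ^ 2 + C (40585383 / 1587545) * X 1 ^ 2)

/-- The lowest-degree homogeneous part of T4·c3·c6·c7 is in degree 7 and equals a
nonzero rational multiple of y(x+3y)(x+240/17·y)(x²+82080/289·y²)(x²+40585383/1587545·y²),
a product of seven pairwise non-proportional linear forms over ℂ. -/

lemma term_hom (q : ℚ) (a b n : ℕ) (h : a + b = n) :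
    (C q * X 0 ^ a * X 1 ^ b : MvPolynomial (Fin 2) ℚ).IsHomogeneous n := by
  subst h
  exact ((isHomogeneous_X_pow (0:Fin 2) a).C_mul q).mul (isHomogeneous_X_pow 1 b)

lemma lin_hom (t : ℂ) : (X 0 + C t * X 1 : MvPolynomial (Fin 2) ℂ).IsHomogeneous 1 :=
  (isHomogeneous_X ℂ 0).add (isHomogeneous_C_mul_X t 1)

lemma lin_ne (t : ℂ) : (X 0 + C t * X 1 : MvPolynomial (Fin 2) ℂ) ≠ 0 := by
  intro h
  have := congrArg (coeff (Finsupp.single 0 1)) h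
  simp [coeff_X', coeff_C_mul, Finsupp.single_eq_single_iff] at this

lemma lin_eq {a b t : ℂ}
    (h : (X 0 + C a * X 1 : MvPolynomial (Fin 2) ℂ) = C t * (X 0 + C b * X 1)) : a = b := by
  have h0 := congrArg (coeff (Finsupp.single 0 1)) h
  have h1 := congrArg (coeff (Finsupp.single 1 1)) h
  simp [coeff_X', coeff_C_mul, Finsupp.single_eq_single_iff] at h0 h1
  rw [h1, ← h0, one_mul]

lemma notX1 (t b : ℂ) : ¬ ((X 1 : MvPolynomial (Fin 2) ℂ) = C t * (X 0 + C b * X 1)) := by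
  intro h
  have h0 := congrArg (coeff (Finsupp.single 0 1)) h
  have h1 := congrArg (coeff (Finsupp.single 1 1)) h
  simp [coeff_X', coeff_C_mul, Finsupp.single_eq_single_iff] at h0 h1
  rw [← h0, zero_mul] at h1
  exact one_ne_zero h1

lemma notX1' (a t : ℂ) : ¬ ((X 0 + C a * X 1 : MvPolynomial (Fin 2) ℂ) = C t * X 1) := by
  intro h
  have h0 := congrArg (coeff (Finsupp.single 0 1)) h
  simp [coeff_X', coeff_C_mul, Finsupp.single_eq_single_iff] at h0

noncomputable def P7 : MvPolynomial (Fin 2) ℚ :=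
  C (204462059290624000) * X 0 ^ 6 * X 1 ^ 1
  + C (71956670486387097600) * X 0 ^ 4 * X 1 ^ 3
  + C (4165371845922521088000) * X 0 ^ 2 * X 1 ^ 5
  + C (3499909367857152000) * X 0 ^ 5 * X 1 ^ 2
  + C (1083497433334205644800) * X 0 ^ 3 * X 1 ^ 4
  + C (25412062068401504256000) * X 0 ^ 1 * X 1 ^ 6
  + C (62875205117694443520000) * X 0 ^ 0 * X 1 ^ 7

lemma hP7 : (P7).IsHomogeneous 7 := by
  unfold P7
  exact (((((((term_hom (204462059290624000) 6 1 7 rfl).add (term_hom (71956670486387097600) 4 3 7 rfl)).add (term_hom (4165371845922521088000) 2 5 7 rfl)).add (term_hom (3499909367857152000) 5 2 7 rfl)).add (term_hom (1083497433334205644800) 3 4 7 rfl)).add (term_hom (25412062068401504256000) 1 6 7 rfl)).add (term_hom (62875205117694443520000) 0 7 7 rfl))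

noncomputable def P8 : MvPolynomial (Fin 2) ℚ :=
  C (-933083670431662080) * X 0 ^ 7 * X 1 ^ 1
  + C (-574923077119515033600) * X 0 ^ 5 * X 1 ^ 3
  + C (-21912736016863069470720) * X 0 ^ 3 * X 1 ^ 5
  + C (-28238672103004569600) * X 0 ^ 6 * X 1 ^ 2
  + C (-2595937734051757424640) * X 0 ^ 4 * X 1 ^ 4
  + C (-62428069916172258508800) * X 0 ^ 2 * X 1 ^ 6
  + C (-110006704877864819097600) * X 0 ^ 1 * X 1 ^ 7
  + C (-28952285191208960) * X 0 ^ 8 * X 1 ^ 0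
  + C (-270511415206200999936000) * X 0 ^ 0 * X 1 ^ 8

lemma hP8 : (P8).IsHomogeneous 8 := by
  unfold P8
  exact (((((((((term_hom (-933083670431662080) 7 1 8 rfl).add (term_hom (-574923077119515033600) 5 3 8 rfl)).add (term_hom (-21912736016863069470720) 3 5 8 rfl)).add (term_hom (-28238672103004569600) 6 2 8 rfl)).add (term_hom (-2595937734051757424640) 4 4 8 rfl)).add (term_hom (-62428069916172258508800) 2 6 8 rfl)).add (term_hom (-110006704877864819097600) 1 7 8 rfl)).add (term_hom (-28952285191208960) 8 0 8 rfl)).add (term_hom (-270511415206200999936000) 0 8 8 rfl))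

noncomputable def P9 : MvPolynomial (Fin 2) ℚ :=
  C (3458649129407676416) * X 0 ^ 8 * X 1 ^ 1
  + C (576498763867207598080) * X 0 ^ 6 * X 1 ^ 3
  + C (22591283000543483756544) * X 0 ^ 4 * X 1 ^ 5
  + C (110951126443781357568) * X 0 ^ 7 * X 1 ^ 2
  + C (6978807328769970339840) * X 0 ^ 5 * X 1 ^ 4
  + C (82189826324640763379712) * X 0 ^ 3 * X 1 ^ 6
  + C (222581060957903871836160) * X 0 ^ 2 * X 1 ^ 7
  + C (208834771645685683077120) * X 0 ^ 1 * X 1 ^ 8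
  + C (61949374931189760) * X 0 ^ 9 * X 1 ^ 0
  + C (509266002210385755340800) * X 0 ^ 0 * X 1 ^ 9

lemma hP9 : (P9).IsHomogeneous 9 := by
  unfold P9
  exact ((((((((((term_hom (3458649129407676416) 8 1 9 rfl).add (term_hom (576498763867207598080) 6 3 9 rfl)).add (term_hom (22591283000543483756544) 4 5 9 rfl)).add (term_hom (110951126443781357568) 7 2 9 rfl)).add (term_hom (6978807328769970339840) 5 4 9 rfl)).add (term_hom (82189826324640763379712) 3 6 9 rfl)).add (term_hom (222581060957903871836160) 2 7 9 rfl)).add (term_hom (208834771645685683077120) 1 8 9 rfl)).add (term_hom (61949374931189760) 9 0 9 rfl)).add (term_hom (509266002210385755340800) 0 9 9 rfl))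

noncomputable def P10 : MvPolynomial (Fin 2) ℚ :=
  C (-53181862193250400256) * X 0 ^ 8 * X 1 ^ 2
  + C (-3768189020332919517184) * X 0 ^ 6 * X 1 ^ 4
  + C (-70000685584200424157184) * X 0 ^ 4 * X 1 ^ 6
  + C (-128010599831181312) * X 0 ^ 10 * X 1 ^ 0
  + C (-1038672618372790468608) * X 0 ^ 7 * X 1 ^ 3
  + C (-23551479300472307466240) * X 0 ^ 5 * X 1 ^ 5
  + C (-144435387188612313464832) * X 0 ^ 3 * X 1 ^ 7
  + C (-9207743350010068992) * X 0 ^ 9 * X 1 ^ 1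
  + C (-381814009365836147226624) * X 0 ^ 2 * X 1 ^ 8
  + C (-228451144315746084323328) * X 0 ^ 1 * X 1 ^ 9
  + C (-551054877599277062461440) * X 0 ^ 0 * X 1 ^ 10

lemma hP10 : (P10).IsHomogeneous 10 := by
  unfold P10
  exact (((((((((((term_hom (-53181862193250400256) 8 2 10 rfl).add (term_hom (-3768189020332919517184) 6 4 10 rfl)).add (term_hom (-70000685584200424157184) 4 6 10 rfl)).add (term_hom (-128010599831181312) 10 0 10 rfl)).add (term_hom (-1038672618372790468608) 7 3 10 rfl)).add (term_hom (-23551479300472307466240) 5 5 10 rfl)).add (term_hom (-144435387188612313464832) 3 7 10 rfl)).add (term_hom (-9207743350010068992) 9 1 10 rfl)).add (term_hom (-381814009365836147226624) 2 8 10 rfl)).add (term_hom (-228451144315746084323328) 1 9 10 rfl)).add (term_hom (-551054877599277062461440) 0 10 10 rfl))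

noncomputable def P11 : MvPolynomial (Fin 2) ℚ :=
  C (1582153225476860160) * X 0 ^ 10 * X 1 ^ 1
  + C (284697403724172499712) * X 0 ^ 8 * X 1 ^ 3
  + C (10443731047062568079872) * X 0 ^ 6 * X 1 ^ 5
  + C (110483111136450074512896) * X 0 ^ 4 * X 1 ^ 7
  + C (71482112191708194048) * X 0 ^ 9 * X 1 ^ 2
  + C (3223924387849588194816) * X 0 ^ 7 * X 1 ^ 4
  + C (38626386722739820392960) * X 0 ^ 5 * X 1 ^ 6
  + C (146717260286401840534272) * X 0 ^ 3 * X 1 ^ 8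
  + C (381006524045178089157888) * X 0 ^ 2 * X 1 ^ 9
  + C (159160825420599931345152) * X 0 ^ 1 * X 1 ^ 10
  + C (275840951428906752) * X 0 ^ 11 * X 1 ^ 0
  + C (378635041726494299465472) * X 0 ^ 0 * X 1 ^ 11

lemma hP11 : (P11).IsHomogeneous 11 := by
  unfold P11
  exact ((((((((((((term_hom (1582153225476860160) 10 1 11 rfl).add (term_hom (284697403724172499712) 8 3 11 rfl)).add (term_hom (10443731047062568079872) 6 5 11 rfl)).add (term_hom (110483111136450074512896) 4 7 11 rfl)).add (term_hom (71482112191708194048) 9 2 11 rfl)).add (term_hom (3223924387849588194816) 7 4 11 rfl)).add (term_hom (38626386722739820392960) 5 6 11 rfl)).add (term_hom (146717260286401840534272) 3 8 11 rfl)).add (term_hom (381006524045178089157888) 2 9 11 rfl)).add (term_hom (159160825420599931345152) 1 10 11 rfl)).add (term_hom (275840951428906752) 11 0 11 rfl)).add (term_hom (378635041726494299465472) 0 11 11 rfl))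

noncomputable def P12 : MvPolynomial (Fin 2) ℚ :=
  C (-6650947743369894144) * X 0 ^ 10 * X 1 ^ 2
  + C (-718127009303811395648) * X 0 ^ 8 * X 1 ^ 4
  + C (-15286428934675837711360) * X 0 ^ 6 * X 1 ^ 6
  + C (-101696721849303613465536) * X 0 ^ 4 * X 1 ^ 8
  + C (12257842242023616) * X 0 ^ 12 * X 1 ^ 0
  + C (-206401396788441429504) * X 0 ^ 9 * X 1 ^ 3
  + C (-4964320553220484030464) * X 0 ^ 7 * X 1 ^ 5
  + C (-36409662252485028074496) * X 0 ^ 5 * X 1 ^ 7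
  + C (-93424151467019949898752) * X 0 ^ 3 * X 1 ^ 9
  + C (-1622191430391665664) * X 0 ^ 11 * X 1 ^ 1
  + C (-238507631196198251348736) * X 0 ^ 2 * X 1 ^ 10
  + C (-73673935001496295441920) * X 0 ^ 1 * X 1 ^ 11
  + C (-172297264827898166553792) * X 0 ^ 0 * X 1 ^ 12

lemma hP12 : (P12).IsHomogeneous 12 := by
  unfold P12
  exact (((((((((((((term_hom (-6650947743369894144) 10 2 12 rfl).add (term_hom (-718127009303811395648) 8 4 12 rfl)).add (term_hom (-15286428934675837711360) 6 6 12 rfl)).add (term_hom (-101696721849303613465536) 4 8 12 rfl)).add (term_hom (12257842242023616) 12 0 12 rfl)).add (term_hom (-206401396788441429504) 9 3 12 rfl)).add (term_hom (-4964320553220484030464) 7 5 12 rfl)).add (term_hom (-36409662252485028074496) 5 7 12 rfl)).add (term_hom (-93424151467019949898752) 3 9 12 rfl)).add (term_hom (-1622191430391665664) 11 1 12 rfl)).add (term_hom (-238507631196198251348736) 2 10 12 rfl)).add (term_hom (-73673935001496295441920) 1 11 12 rfl)).add (term_hom (-172297264827898166553792) 0 12 12 rfl))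

noncomputable def P13 : MvPolynomial (Fin 2) ℚ :=
  C (-102392947956168320) * X 0 ^ 12 * X 1 ^ 1
  + C (15171929443218622560) * X 0 ^ 10 * X 1 ^ 3
  + C (983706563000476700960) * X 0 ^ 8 * X 1 ^ 5
  + C (12975263176046600379840) * X 0 ^ 6 * X 1 ^ 7
  + C (57516408487772367814080) * X 0 ^ 4 * X 1 ^ 9
  + C (4294946942920608000) * X 0 ^ 11 * X 1 ^ 2
  + C (300387398892698270640) * X 0 ^ 9 * X 1 ^ 4
  + C (4334582451886902453120) * X 0 ^ 7 * X 1 ^ 6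
  + C (20992746427157142548880) * X 0 ^ 5 * X 1 ^ 8
  + C (38392396739558910737280) * X 0 ^ 3 * X 1 ^ 10
  + C (96192568411677711352800) * X 0 ^ 2 * X 1 ^ 11
  + C (22925648336392422833040) * X 0 ^ 1 * X 1 ^ 12
  + C (-17608147418058960) * X 0 ^ 13 * X 1 ^ 0
  + C (52530655703041251442080) * X 0 ^ 0 * X 1 ^ 13

lemma hP13 : (P13).IsHomogeneous 13 := by
  unfold P13
  exact ((((((((((((((term_hom (-102392947956168320) 12 1 13 rfl).add (term_hom (15171929443218622560) 10 3 13 rfl)).add (term_hom (983706563000476700960) 8 5 13 rfl)).add (term_hom (12975263176046600379840) 6 7 13 rfl)).add (term_hom (57516408487772367814080) 4 9 13 rfl)).add (term_hom (4294946942920608000) 11 2 13 rfl)).add (term_hom (300387398892698270640) 9 4 13 rfl)).add (term_hom (4334582451886902453120) 7 6 13 rfl)).add (term_hom (20992746427157142548880) 5 8 13 rfl)).add (term_hom (38392396739558910737280) 3 10 13 rfl)).add (term_hom (96192568411677711352800) 2 11 13 rfl)).add (term_hom (22925648336392422833040) 1 12 13 rfl)).add (term_hom (-17608147418058960) 13 0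 13 rfl)).add (term_hom (52530655703041251442080) 0 13 13 rfl))

noncomputable def P14 : MvPolynomial (Fin 2) ℚ :=
  C (-255377956660988) * X 0 ^ 14 * X 1 ^ 0
  + C (248515756257874680) * X 0 ^ 12 * X 1 ^ 2
  + C (-20083927637603317524) * X 0 ^ 10 * X 1 ^ 4
  + C (-772009505221126683312) * X 0 ^ 8 * X 1 ^ 6
  + C (-6553462860195581939044) * X 0 ^ 6 * X 1 ^ 8
  + C (-20108789480691918043848) * X 0 ^ 4 * X 1 ^ 10
  + C (53060056746130776) * X 0 ^ 13 * X 1 ^ 1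
  + C (-6059388515120292960) * X 0 ^ 11 * X 1 ^ 3
  + C (-242962577814569464392) * X 0 ^ 9 * X 1 ^ 5
  + C (-2232943028814508678656) * X 0 ^ 7 * X 1 ^ 7
  + C (-7483072071234453644472) * X 0 ^ 5 * X 1 ^ 9
  + C (-10142698680478864412064) * X 0 ^ 3 * X 1 ^ 11
  + C (-24867588583308886639884) * X 0 ^ 2 * X 1 ^ 12
  + C (-4735185511108823750232) * X 0 ^ 1 * X 1 ^ 13
  + C (-10596505868475661774080) * X 0 ^ 0 * X 1 ^ 14

lemma hP14 : (P14).IsHomogeneous 14 := by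
  unfold P14
  exact (((((((((((((((term_hom (-255377956660988) 14 0 14 rfl).add (term_hom (248515756257874680) 12 2 14 rfl)).add (term_hom (-20083927637603317524) 10 4 14 rfl)).add (term_hom (-772009505221126683312) 8 6 14 rfl)).add (term_hom (-6553462860195581939044) 6 8 14 rfl)).add (term_hom (-20108789480691918043848) 4 10 14 rfl)).add (term_hom (53060056746130776) 13 1 14 rfl)).add (term_hom (-6059388515120292960) 11 3 14 rfl)).add (term_hom (-242962577814569464392) 9 5 14 rfl)).add (term_hom (-2232943028814508678656) 7 7 14 rfl)).add (term_hom (-7483072071234453644472) 5 9 14 rfl)).add (term_hom (-10142698680478864412064) 3 11 14 rfl)).add (term_hom (-24867588583308886639884) 2 12 14 rfl)).add (term_hom (-4735185511108823750232) 1 13 14 rfl)).add (term_hom (-10596505868475661774080) 0 14 14 rfl))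

noncomputable def P15 : MvPolynomial (Fin 2) ℚ :=
  C (566999364342773) * X 0 ^ 14 * X 1 ^ 1
  + C (-264657915604244285) * X 0 ^ 12 * X 1 ^ 3
  + C (15154394464663351158) * X 0 ^ 10 * X 1 ^ 5
  + C (343448254566219041958) * X 0 ^ 8 * X 1 ^ 7
  + C (1917403449001153137297) * X 0 ^ 6 * X 1 ^ 9
  + C (4200437575918373079879) * X 0 ^ 4 * X 1 ^ 11
  + C (-59824107722684181) * X 0 ^ 13 * X 1 ^ 2
  + C (4670507434788173601) * X 0 ^ 11 * X 1 ^ 4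
  + C (109924064278717703766) * X 0 ^ 9 * X 1 ^ 6
  + C (665214447406778577954) * X 0 ^ 7 * X 1 ^ 8
  + C (1597986750643674472167) * X 0 ^ 5 * X 1 ^ 10
  + C (1658567750246100125037) * X 0 ^ 3 * X 1 ^ 12
  + C (3966002535276844300692) * X 0 ^ 2 * X 1 ^ 13
  + C (621734095026603251208) * X 0 ^ 1 * X 1 ^ 14
  + C (-3820890723552) * X 0 ^ 15 * X 1 ^ 0
  + C (1354978875155076462528) * X 0 ^ 0 * X 1 ^ 15

lemma hP15 : (P15).IsHomogeneous 15 := by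
  unfold P15
  exact ((((((((((((((((term_hom (566999364342773) 14 1 15 rfl).add (term_hom (-264657915604244285) 12 3 15 rfl)).add (term_hom (15154394464663351158) 10 5 15 rfl)).add (term_hom (343448254566219041958) 8 7 15 rfl)).add (term_hom (1917403449001153137297) 6 9 15 rfl)).add (term_hom (4200437575918373079879) 4 11 15 rfl)).add (term_hom (-59824107722684181) 13 2 15 rfl)).add (term_hom (4670507434788173601) 11 4 15 rfl)).add (term_hom (109924064278717703766) 9 6 15 rfl)).add (term_hom (665214447406778577954) 7 8 15 rfl)).add (term_hom (1597986750643674472167) 5 10 15 rfl)).add (term_hom (1658567750246100125037) 3 12 15 rfl)).add (term_hom (3966002535276844300692) 2 13 15 rfl)).add (term_hom (621734095026603251208) 1 14 15 rfl)).add (term_hom (-3820890723552) 15 0 15 rfl)).add (term_hom (1354978875155076462528) 0 15 15 rfl))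

noncomputable def P16 : MvPolynomial (Fin 2) ℚ :=
  C (-55803386856) * X 0 ^ 16 * X 1 ^ 0
  + C (-417048282239174) * X 0 ^ 14 * X 1 ^ 2
  + C (130975305814455738) * X 0 ^ 12 * X 1 ^ 4
  + C (-6013829534351474640) * X 0 ^ 10 * X 1 ^ 6
  + C (-79076553449725224468) * X 0 ^ 8 * X 1 ^ 8
  + C (-295137840384079139142) * X 0 ^ 6 * X 1 ^ 10
  + C (-477092761130884272606) * X 0 ^ 4 * X 1 ^ 12
  + C (5786750598408) * X 0 ^ 15 * X 1 ^ 1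
  + C (29912945975670834) * X 0 ^ 13 * X 1 ^ 3
  + C (-1854747439280727018) * X 0 ^ 11 * X 1 ^ 5
  + C (-25628717907487154100) * X 0 ^ 9 * X 1 ^ 7
  + C (-104552702555508963084) * X 0 ^ 7 * X 1 ^ 9
  + C (-186256208530607862294) * X 0 ^ 5 * X 1 ^ 11
  + C (-152373744944768442546) * X 0 ^ 3 * X 1 ^ 13
  + C (-354246658303691284164) * X 0 ^ 2 * X 1 ^ 14
  + C (-46923551478189664200) * X 0 ^ 1 * X 1 ^ 15
  + C (-99358581339674042688) * X 0 ^ 0 * X 1 ^ 16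

lemma hP16 : (P16).IsHomogeneous 16 := by
  unfold P16
  exact (((((((((((((((((term_hom (-55803386856) 16 0 16 rfl).add (term_hom (-417048282239174) 14 2 16 rfl)).add (term_hom (130975305814455738) 12 4 16 rfl)).add (term_hom (-6013829534351474640) 10 6 16 rfl)).add (term_hom (-79076553449725224468) 8 8 16 rfl)).add (term_hom (-295137840384079139142) 6 10 16 rfl)).add (term_hom (-477092761130884272606) 4 12 16 rfl)).add (term_hom (5786750598408) 15 1 16 rfl)).add (term_hom (29912945975670834) 13 3 16 rfl)).add (term_hom (-1854747439280727018) 11 5 16 rfl)).add (term_hom (-25628717907487154100) 9 7 16 rfl)).add (term_hom (-104552702555508963084) 7 9 16 rfl)).add (term_hom (-186256208530607862294) 5 11 16 rfl)).add (term_hom (-152373744944768442546) 3 13 16 rfl)).add (term_hom (-354246658303691284164) 2 14 16 rfl)).add (term_hom (-46923551478189664200) 1 15 16 rfl)).add (term_hom (-99358581339674042688) 0 16 16 rfl))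

noncomputable def P17 : MvPolynomial (Fin 2) ℚ :=
  C (42661858632) * X 0 ^ 16 * X 1 ^ 1
  + C (101580555019773) * X 0 ^ 14 * X 1 ^ 3
  + C (-24715607056588229) * X 0 ^ 12 * X 1 ^ 5
  + C (972248402758383342) * X 0 ^ 10 * X 1 ^ 7
  + C (7058078499953832318) * X 0 ^ 8 * X 1 ^ 9
  + C (18268741808632024137) * X 0 ^ 6 * X 1 ^ 11
  + C (22556640176338989519) * X 0 ^ 4 * X 1 ^ 13
  + C (-2190811916808) * X 0 ^ 15 * X 1 ^ 2
  + C (-5597060140778517) * X 0 ^ 13 * X 1 ^ 4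
  + C (297116364415480569) * X 0 ^ 11 * X 1 ^ 6
  + C (2325276639641274774) * X 0 ^ 9 * X 1 ^ 8
  + C (6640818314767133994) * X 0 ^ 7 * X 1 ^ 10
  + C (9070844327847815463) * X 0 ^ 5 * X 1 ^ 12
  + C (6001092822089625525) * X 0 ^ 3 * X 1 ^ 14
  + C (13528802342893808988) * X 0 ^ 2 * X 1 ^ 15
  + C (1548438488347192200) * X 0 ^ 1 * X 1 ^ 16
  + C (3179886050296501920) * X 0 ^ 0 * X 1 ^ 17

lemma hP17 : (P17).IsHomogeneous 17 := by
  unfold P17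
  exact (((((((((((((((((term_hom (42661858632) 16 1 17 rfl).add (term_hom (101580555019773) 14 3 17 rfl)).add (term_hom (-24715607056588229) 12 5 17 rfl)).add (term_hom (972248402758383342) 10 7 17 rfl)).add (term_hom (7058078499953832318) 8 9 17 rfl)).add (term_hom (18268741808632024137) 6 11 17 rfl)).add (term_hom (22556640176338989519) 4 13 17 rfl)).add (term_hom (-2190811916808) 15 2 17 rfl)).add (term_hom (-5597060140778517) 13 4 17 rfl)).add (term_hom (297116364415480569) 11 6 17 rfl)).add (term_hom (2325276639641274774) 9 8 17 rfl)).add (term_hom (6640818314767133994) 7 10 17 rfl)).add (term_hom (9070844327847815463) 5 12 17 rfl)).add (term_hom (6001092822089625525) 3 14 17 rfl)).add (term_hom (13528802342893808988) 2 15 17 rfl)).add (term_hom (1548438488347192200) 1 16 17 rfl)).add (term_hom (3179886050296501920) 0 17 17 rfl))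

lemma hdecomp : prodPoly = P7 + P8 + P9 + P10 + P11 + P12 + P13 + P14 + P15 + P16 + P17 := by
  unfold prodPoly c3 c6 c7 P7 P8 P9 P10 P11 P12 P13 P14 P15 P16 P17
  simp only [map_neg, map_ofNat, map_one]
  ring

lemma comp_zero (k : ℕ) (hk : k < 7) : homogeneousComponent k prodPoly = 0 := by
  rw [hdecomp, map_add, map_add, map_add, map_add, map_add, map_add, map_add, map_add,
    map_add, map_add,
    homogeneousComponent_of_mem ((mem_homogeneousSubmodule _ _).2 hP7),
    homogeneousComponent_of_mem ((mem_homogeneousSubmodule _ _).2 hP8),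
    homogeneousComponent_of_mem ((mem_homogeneousSubmodule _ _).2 hP9),
    homogeneousComponent_of_mem ((mem_homogeneousSubmodule _ _).2 hP10),
    homogeneousComponent_of_mem ((mem_homogeneousSubmodule _ _).2 hP11),
    homogeneousComponent_of_mem ((mem_homogeneousSubmodule _ _).2 hP12),
    homogeneousComponent_of_mem ((mem_homogeneousSubmodule _ _).2 hP13),
    homogeneousComponent_of_mem ((mem_homogeneousSubmodule _ _).2 hP14),
    homogeneousComponent_of_mem ((mem_homogeneousSubmodule _ _).2 hP15),
    homogeneousComponent_of_mem ((mem_homogeneousSubmodule _ _).2 hP16),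
    homogeneousComponent_of_mem ((mem_homogeneousSubmodule _ _).2 hP17),
    if_neg (by omega : k ≠ 7), if_neg (by omega : k ≠ 8), if_neg (by omega : k ≠ 9),
    if_neg (by omega : k ≠ 10), if_neg (by omega : k ≠ 11), if_neg (by omega : k ≠ 12),
    if_neg (by omega : k ≠ 13), if_neg (by omega : k ≠ 14), if_neg (by omega : k ≠ 15),
    if_neg (by omega : k ≠ 16), if_neg (by omega : k ≠ 17)]
  simp

lemma comp7 : homogeneousComponent 7 prodPoly = P7 := by
  rw [hdecomp, map_add, map_add, map_add, map_add, map_add, map_add, map_add, map_add,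
    map_add, map_add,
    homogeneousComponent_of_mem ((mem_homogeneousSubmodule _ _).2 hP7),
    homogeneousComponent_of_mem ((mem_homogeneousSubmodule _ _).2 hP8),
    homogeneousComponent_of_mem ((mem_homogeneousSubmodule _ _).2 hP9),
    homogeneousComponent_of_mem ((mem_homogeneousSubmodule _ _).2 hP10),
    homogeneousComponent_of_mem ((mem_homogeneousSubmodule _ _).2 hP11),
    homogeneousComponent_of_mem ((mem_homogeneousSubmodule _ _).2 hP12),
    homogeneousComponent_of_mem ((mem_homogeneousSubmodule _ _).2 hP13),
    homogeneousComponent_of_mem ((mem_homogeneousSubmodule _ _).2 hP14),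
    homogeneousComponent_of_mem ((mem_homogeneousSubmodule _ _).2 hP15),
    homogeneousComponent_of_mem ((mem_homogeneousSubmodule _ _).2 hP16),
    homogeneousComponent_of_mem ((mem_homogeneousSubmodule _ _).2 hP17),
    if_pos rfl, if_neg (by omega : (7:ℕ) ≠ 8), if_neg (by omega : (7:ℕ) ≠ 9),
    if_neg (by omega : (7:ℕ) ≠ 10), if_neg (by omega : (7:ℕ) ≠ 11),
    if_neg (by omega : (7:ℕ) ≠ 12), if_neg (by omega : (7:ℕ) ≠ 13),
    if_neg (by omega : (7:ℕ) ≠ 14), if_neg (by omega : (7:ℕ) ≠ 15),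
    if_neg (by omega : (7:ℕ) ≠ 16), if_neg (by omega : (7:ℕ) ≠ 17)]
  simp

lemma key7 : (C (204462059290624000 : ℚ) : MvPolynomial (Fin 2) ℚ) * target7 = P7 := by
  have hc : (C (204462059290624000 : ℚ) : MvPolynomial (Fin 2) ℚ)
      = C 26214400 * C 17 * C 289 * C 1587545 := by
    rw [← C_mul, ← C_mul, ← C_mul]; norm_num
  have e1 : (C (17 : ℚ) : MvPolynomial (Fin 2) ℚ) * (X 0 + C (240 / 17) * X 1)
      = C 17 * X 0 + C 240 * X 1 := by
    rw [mul_add, ← mul_assoc, ← C_mul]; norm_num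
  have e2 : (C (289 : ℚ) : MvPolynomial (Fin 2) ℚ) * (X 0 ^ 2 + C (82080 / 289) * X 1 ^ 2)
      = C 289 * X 0 ^ 2 + C 82080 * X 1 ^ 2 := by
    rw [mul_add, ← mul_assoc, ← C_mul]; norm_num
  have e3 : (C (1587545 : ℚ) : MvPolynomial (Fin 2) ℚ)
        * (X 0 ^ 2 + C (40585383 / 1587545) * X 1 ^ 2)
      = C 1587545 * X 0 ^ 2 + C 40585383 * X 1 ^ 2 := by
    rw [mul_add, ← mul_assoc, ← C_mul]; norm_num
  have grp : (C (204462059290624000 : ℚ) : MvPolynomial (Fin 2) ℚ) * target7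
      = C 26214400 * (X 1 * (X 0 + 3 * X 1)
        * (C 17 * (X 0 + C (240 / 17) * X 1))
        * (C 289 * (X 0 ^ 2 + C (82080 / 289) * X 1 ^ 2))
        * (C 1587545 * (X 0 ^ 2 + C (40585383 / 1587545) * X 1 ^ 2))) := by
    rw [target7, hc]; ring
  rw [grp, e1, e2, e3]
  unfold P7
  simp only [map_ofNat]
  ring

set_option maxHeartbeats 3000000 in
theorem stmt6 :
    (∀ k < 7, homogeneousComponent k prodPoly = 0) ∧
    (∃ c : ℚ, c ≠ 0 ∧ homogeneousComponent 7 prodPoly = C c * target7) ∧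
    (∃ (ℓ : Fin 7 → MvPolynomial (Fin 2) ℂ) (d : ℂ),
      d ≠ 0 ∧
      (∀ i, (ℓ i).IsHomogeneous 1 ∧ ℓ i ≠ 0) ∧
      (∀ i j, i ≠ j → ¬ ∃ t : ℂ, ℓ i = C t * ℓ j) ∧
      MvPolynomial.map (algebraMap ℚ ℂ) (homogeneousComponent 7 prodPoly) =
        C d * ∏ i, ℓ i) := by
  obtain ⟨s1, hs1⟩ := IsAlgClosed.exists_pow_nat_eq (-(82080 / 289) : ℂ) two_pos
  obtain ⟨s2, hs2⟩ := IsAlgClosed.exists_pow_nat_eq (-(40585383 / 1587545) : ℂ) two_pos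
  have hs1' : s1 ≠ 0 := by intro e; rw [e] at hs1; norm_num at hs1
  have hs2' : s2 ≠ 0 := by intro e; rw [e] at hs2; norm_num at hs2
  refine ⟨fun k hk => comp_zero k hk,
    ⟨204462059290624000, by norm_num, by rw [comp7, ← key7]⟩,
    ![X 1, X 0 + C 3 * X 1, X 0 + C (240 / 17) * X 1, X 0 + C s1 * X 1, X 0 + C (-s1) * X 1,
      X 0 + C s2 * X 1, X 0 + C (-s2) * X 1], (204462059290624000 : ℂ), by norm_num,
    ?_, ?_, ?_⟩
  · intro i
    fin_cases i <;>
      first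
        | exact ⟨isHomogeneous_X ℂ 1, X_ne_zero 1⟩
        | exact ⟨lin_hom _, lin_ne _⟩
  · intro i j hij ht
    obtain ⟨t, ht⟩ := ht
    fin_cases i <;> fin_cases j <;>
      first
        | exact hij rfl
        | exact notX1 t _ ht
        | exact notX1' _ t ht
        | (have e := lin_eq ht; refine absurd ?_ hs1'; linear_combination e / 2)
        | (have e := lin_eq ht; refine absurd ?_ hs1'; linear_combination -e / 2)
        | (have e := lin_eq ht; refine absurd ?_ hs2'; linear_combination e / 2)
        | (have e := lin_eq ht; refine absurd ?_ hs2'; linear_combination -e / 2)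
        | (have e := lin_eq ht;
           have e2 := congrArg (fun z : ℂ => z ^ 2) e;
           simp -failIfUnchanged only [neg_sq, hs1, hs2] at e2;
           norm_num at e2)
  · have hq1 : (X 0 + C s1 * X 1) * (X 0 + C (-s1) * X 1)
        = (X 0 ^ 2 + C ((82080 : ℂ) / 289) * X 1 ^ 2 : MvPolynomial (Fin 2) ℂ) := by
      have h : ((82080 : ℂ) / 289) = -(s1 ^ 2) := by rw [hs1]; ring
      rw [h]; simp only [map_neg, map_pow]; ring
    have hq2 : (X 0 + C s2 * X 1) * (X 0 + C (-s2) * X 1)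
        = (X 0 ^ 2 + C ((40585383 : ℂ) / 1587545) * X 1 ^ 2 : MvPolynomial (Fin 2) ℂ) := by
      have h : ((40585383 : ℂ) / 1587545) = -(s2 ^ 2) := by rw [hs2]; ring
      rw [h]; simp only [map_neg, map_pow]; ring
    have hprod : ∏ i, (![X 1, X 0 + C 3 * X 1, X 0 + C (240 / 17) * X 1, X 0 + C s1 * X 1,
          X 0 + C (-s1) * X 1, X 0 + C s2 * X 1, X 0 + C (-s2) * X 1]
          : Fin 7 → MvPolynomial (Fin 2) ℂ) i
        = X 1 * (X 0 + C 3 * X 1) * (X 0 + C ((240 : ℂ) / 17) * X 1) * (X 0 + C s1 * X 1)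
          * (X 0 + C (-s1) * X 1) * (X 0 + C s2 * X 1) * (X 0 + C (-s2) * X 1) := by
      rw [Fin.prod_univ_seven]; rfl
    have expand : MvPolynomial.map (algebraMap ℚ ℂ)
          ((C (204462059290624000 : ℚ) : MvPolynomial (Fin 2) ℚ) * target7)
        = C ((204462059290624000 : ℂ)) * (X 1 * (X 0 + 3 * X 1)
            * (X 0 + C ((240 : ℂ) / 17) * X 1)
            * (X 0 ^ 2 + C ((82080 : ℂ) / 289) * X 1 ^ 2)
            * (X 0 ^ 2 + C ((40585383 : ℂ) / 1587545) * X 1 ^ 2)) := by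
      simp only [target7, map_mul, map_add, map_pow, map_C, map_X, map_ofNat, map_div₀]
    rw [comp7, ← key7, hprod, expand, ← hq1, ← hq2]
    simp only [map_ofNat]
    ring
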